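/- Let k > 0, α_d > 0, α_c > 0, β > 0, p_l ∈ ℝ, let K and L be natural numbers with α_c·K + α_d·(1+β)·L > 0, let s_1, …, s_K be the providers' states of charge and b_1, …, b_L, σ_1, …, σ_L be the receivers' capacities and states of charge. Define total supply E_d(p_d) = (Σ_{n=1}^{K} s_n)/α_d − (p_l − p_d)·K/(k·α_d) and total demand E_c(p_c) = (Σ_{m=1}^{L} (b_m − σ_m))/α_c − (p_l + p_c)·L/(k·α_c), and impose the price relation p_c = (1+β)·p_d. Then the market-clearing equation E_d(p_d) = E_c((1+β)·p_d) holds for a real number p_d if and only if p_d = [p_l·(α_c·K − α_d·L) − k·(α_c·Σ_{n=1}^{K} s_n − α_d·Σ_{m=1}^{L} (b_m − σ_m))] / (α_c·K + α_d·(1+β)·L). In particular, the clearing discharging price is unique and equal to this closed-form expression. -/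

import Mathlib

/-!
Multiplied by `k * α_d * α_c`, the clearing equation becomes linear in `p_d` with coefficient
`α_c * K + α_d * (1 + β) * L`, which is nonzero, so it has exactly one solution.
-/

theorem supply_eq_demand_iff {k α_d α_c β p_l S D K L p : ℝ}
    (hk : k ≠ 0) (hαd : α_d ≠ 0) (hαc : α_c ≠ 0) :
    S / α_d - (p_l - p) * K / (k * α_d) = D / α_c - (p_l + (1 + β) * p) * L / (k * α_c) ↔
      p * (α_c * K + α_d * (1 + β) * L) = p_l * (α_c * K - α_d * L) - k * (α_c * S - α_d * D) := by
  have h_excess :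
      S / α_d - (p_l - p) * K / (k * α_d) - (D / α_c - (p_l + (1 + β) * p) * L / (k * α_c)) =
        (p * (α_c * K + α_d * (1 + β) * L) - (p_l * (α_c * K - α_d * L) - k * (α_c * S - α_d * D)))
          / (k * α_d * α_c) := by
    field_simp
    ring
  rw [← sub_eq_zero, h_excess, div_eq_zero_iff, or_iff_left (by positivity), sub_eq_zero]

theorem market_clearing_price_general
    (k α_d α_c β p_l : ℝ) (hk : 0 < k) (hαd : 0 < α_d) (hαc : 0 < α_c)
    (K L : ℕ)
    (hden : 0 < α_c * (K : ℝ) + α_d * (1 + β) * (L : ℝ))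
    (s : Fin K → ℝ) (b σ : Fin L → ℝ)
    (Ed Ec : ℝ → ℝ)
    (hEd : ∀ p_d : ℝ,
      Ed p_d = (∑ n : Fin K, s n) / α_d - (p_l - p_d) * (K : ℝ) / (k * α_d))
    (hEc : ∀ p_c : ℝ,
      Ec p_c = (∑ m : Fin L, (b m - σ m)) / α_c - (p_l + p_c) * (L : ℝ) / (k * α_c)) :
    ∀ p_d : ℝ, Ed p_d = Ec ((1 + β) * p_d) ↔
      p_d = (p_l * (α_c * (K : ℝ) - α_d * (L : ℝ))
              - k * (α_c * (∑ n : Fin K, s n) - α_d * (∑ m : Fin L, (b m - σ m))))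
            / (α_c * (K : ℝ) + α_d * (1 + β) * (L : ℝ)) := by
  intro p_d
  rw [hEd, hEc, supply_eq_demand_iff hk.ne' hαd.ne' hαc.ne', eq_div_iff hden.ne']

/-- the market clearing equation `E_d(p_d) = E_c((1+β)·p_d)` holds iff
`p_d` equals the closed-form clearing price of the paper (eqn (18)). -/
theorem market_clearing_price
    (k α_d α_c β p_l : ℝ) (hk : 0 < k) (hαd : 0 < α_d) (hαc : 0 < α_c) (hβ : 0 < β)
    (K L : ℕ)
    (hden : 0 < α_c * (K : ℝ) + α_d * (1 + β) * (L : ℝ))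
    (s : Fin K → ℝ) (b σ : Fin L → ℝ)
    (Ed Ec : ℝ → ℝ)
    (hEd : ∀ p_d : ℝ,
      Ed p_d = (∑ n : Fin K, s n) / α_d - (p_l - p_d) * (K : ℝ) / (k * α_d))
    (hEc : ∀ p_c : ℝ,
      Ec p_c = (∑ m : Fin L, (b m - σ m)) / α_c - (p_l + p_c) * (L : ℝ) / (k * α_c)) :
    ∀ p_d : ℝ, Ed p_d = Ec ((1 + β) * p_d) ↔
      p_d = (p_l * (α_c * (K : ℝ) - α_d * (L : ℝ))
              - k * (α_c * (∑ n : Fin K, s n) - α_d * (∑ m : Fin L, (b m - σ m))))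
            / (α_c * (K : ℝ) + α_d * (1 + β) * (L : ℝ)) :=
  market_clearing_price_general k α_d α_c β p_l hk hαd hαc K L hden s b σ Ed Ec hEd hEc
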